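/- arXiv:2308.12184 — 7 statements merged into one kernel-verified Lean document; each statement's English description precedes it below -/
import Mathlib

section
/- Let ψ : ℕ → ℝ be nonnegative with ∑_{k=1}^∞ k·ψ(k) < ∞, and let n ≥ 1. Then (1/n)·∑_{k=1}^∞ k·ψ(k+n) ≥ ∑_{k=1}^∞ ∑_{ν=(2k+1)n−k}^∞ ψ(ν). -/
theorem stmt_0 (ψ : ℕ → ℝ) (hψ : ∀ k, 1 ≤ k → 0 ≤ ψ k)
    (hsum : Summable (fun k : ℕ => (k : ℝ) * ψ k)) (n : ℕ) (hn : 1 ≤ n) :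
    (1 / (n : ℝ)) * ∑' k : ℕ, ((k + 1 : ℕ) : ℝ) * ψ (k + 1 + n) ≥
      ∑' k : ℕ, ∑' j : ℕ, ψ ((2 * (k + 1) + 1) * n - (k + 1) + j) := by
  have hn' : (0:ℝ) < n := by exact_mod_cast hn
  have hψ' : ∀ m : ℕ, 0 ≤ ψ (m + 1 + n) := fun m => hψ _ (by omega)
  have hshift : Summable (fun m : ℕ => ((m + 1 + n : ℕ) : ℝ) * ψ (m + 1 + n)) :=
    hsum.comp_injective (fun a b h => by omega)
  have hS : Summable (fun m : ℕ => ((m + 1 : ℕ) : ℝ) * ψ (m + 1 + n)) := by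
    refine Summable.of_nonneg_of_le (fun m => mul_nonneg (by positivity) (hψ' m))
      (fun m => ?_) hshift
    exact mul_le_mul_of_nonneg_right (by exact_mod_cast Nat.le_add_right (m+1) n) (hψ' m)
  set G : ℕ × ℕ → ℝ := fun p => if (p.2 + 1) * n ≤ p.1 + 1 then ψ (p.1 + 1 + n) else 0
    with hGdef
  have hG0 : ∀ p, 0 ≤ G p := fun p => by
    by_cases h : (p.2 + 1) * n ≤ p.1 + 1 <;> simp [hGdef, h, hψ' p.1]
  -- fiber sums
  have hcond : ∀ m i : ℕ, ((i + 1) * n ≤ m + 1) ↔ i ∈ Finset.range ((m + 1) / n) := by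
    intro m i
    rw [Finset.mem_range, ← Nat.succ_le_iff, Nat.le_div_iff_mul_le hn]
  have hfib : ∀ m : ℕ, ∑' i : ℕ, G (m, i) = (((m + 1) / n : ℕ) : ℝ) * ψ (m + 1 + n) := by
    intro m
    have h1 : ∀ i, G (m, i) = if i ∈ Finset.range ((m+1)/n) then ψ (m+1+n) else 0 :=
      fun i => if_congr (hcond m i) rfl rfl
    rw [tsum_congr h1, tsum_eq_sum (s := Finset.range ((m+1)/n)) (fun b hb => if_neg hb),
      Finset.sum_congr rfl (fun x hx => if_pos hx), Finset.sum_const, Finset.card_range,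
      nsmul_eq_mul]
  have hfibsummable : ∀ m : ℕ, Summable (fun i => G (m, i)) := by
    intro m
    apply summable_of_ne_finset_zero (s := Finset.range ((m+1)/n))
    intro b hb
    exact if_neg (fun h => hb ((hcond m b).mp h))
  have hFS : Summable (fun m : ℕ => (((m + 1) / n : ℕ) : ℝ) * ψ (m + 1 + n)) := by
    refine Summable.of_nonneg_of_le (fun m => mul_nonneg (by positivity) (hψ' m))
      (fun m => ?_) hS
    refine mul_le_mul_of_nonneg_right ?_ (hψ' m)
    exact_mod_cast Nat.div_le_self (m+1) n
  have hGsum : Summable G := by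
    refine (summable_prod_of_nonneg hG0).2 ⟨hfibsummable, ?_⟩
    simpa only [hfib] using hFS
  -- the injection
  set Φ : ℕ × ℕ → ℕ × ℕ :=
    fun p => ((2 * (p.1 + 1) + 1) * n - (p.1 + 1) + p.2 - (n + 1), p.1) with hΦdef
  have key : ∀ k j : ℕ,
      ((2*(k+1)+1)*n - (k+1) + j) = (((2*(k+1)+1)*n - (k+1) + j - (n+1)) + 1 + n) ∧
      (k + 1) * n ≤ ((2*(k+1)+1)*n - (k+1) + j - (n+1)) + 1 := by
    intro k j
    have h1 : (2*(k+1)+1)*n = 2*((k+1)*n) + n := by ring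
    have h2 : k + 1 ≤ (k+1)*n := Nat.le_mul_of_pos_right _ hn
    rw [h1]
    generalize (k+1)*n = t at h2 ⊢
    omega
  have hΦinj : Function.Injective Φ := by
    rintro ⟨k₁, j₁⟩ ⟨k₂, j₂⟩ h
    simp only [hΦdef, Prod.mk.injEq] at h
    obtain ⟨h1, h2⟩ := h
    subst h2
    have h3 : (2*(k₁+1)+1)*n = 2*((k₁+1)*n) + n := by ring
    have h4 : k₁ + 1 ≤ (k₁+1)*n := Nat.le_mul_of_pos_right _ hn
    rw [h3] at h1
    refine Prod.ext rfl ?_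
    simp only
    generalize (k₁+1)*n = t at h1 h4
    omega
  have hgG : ∀ p : ℕ × ℕ, ψ ((2 * (p.1 + 1) + 1) * n - (p.1 + 1) + p.2) = G (Φ p) := by
    rintro ⟨k, j⟩
    obtain ⟨e1, e2⟩ := key k j
    simp only [hΦdef, hGdef]
    rw [if_pos e2]
    exact congrArg ψ e1
  have hgsum : Summable (fun p : ℕ × ℕ => ψ ((2 * (p.1 + 1) + 1) * n - (p.1 + 1) + p.2)) := by
    have := hGsum.comp_injective hΦinj
    exact this.congr (fun p => (hgG p).symm)
  -- chain of (in)equalities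
  have step1 : (∑' k : ℕ, ∑' j : ℕ, ψ ((2 * (k + 1) + 1) * n - (k + 1) + j))
      = ∑' p : ℕ × ℕ, ψ ((2 * (p.1 + 1) + 1) * n - (p.1 + 1) + p.2) :=
    (Summable.tsum_prod' hgsum hgsum.prod_factor).symm
  have step2 : (∑' p : ℕ × ℕ, ψ ((2 * (p.1 + 1) + 1) * n - (p.1 + 1) + p.2)) ≤ ∑' p, G p := by
    refine Summable.tsum_le_tsum_of_inj Φ hΦinj (fun c _ => hG0 c) (fun p => le_of_eq (hgG p))
      hgsum hGsum
  have step3 : (∑' p, G p) = ∑' m : ℕ, (((m + 1) / n : ℕ) : ℝ) * ψ (m + 1 + n) := by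
    rw [Summable.tsum_prod' hGsum hGsum.prod_factor]
    exact tsum_congr hfib
  have step4 : (∑' m : ℕ, (((m + 1) / n : ℕ) : ℝ) * ψ (m + 1 + n))
      ≤ ∑' m : ℕ, (1 / (n:ℝ)) * (((m + 1 : ℕ) : ℝ) * ψ (m + 1 + n)) := by
    refine Summable.tsum_le_tsum (fun m => ?_) hFS (hS.mul_left _)
    have hd : (((m + 1) / n : ℕ) : ℝ) ≤ ((m + 1 : ℕ) : ℝ) / n := by
      rw [le_div_iff₀ hn']
      exact_mod_cast Nat.div_mul_le_self (m+1) n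
    calc (((m + 1) / n : ℕ) : ℝ) * ψ (m + 1 + n)
        ≤ (((m + 1 : ℕ) : ℝ) / n) * ψ (m + 1 + n) :=
          mul_le_mul_of_nonneg_right hd (hψ' m)
      _ = (1 / (n:ℝ)) * (((m + 1 : ℕ) : ℝ) * ψ (m + 1 + n)) := by ring
  have step5 : (∑' m : ℕ, (1 / (n:ℝ)) * (((m + 1 : ℕ) : ℝ) * ψ (m + 1 + n)))
      = (1 / (n : ℝ)) * ∑' k : ℕ, ((k + 1 : ℕ) : ℝ) * ψ (k + 1 + n) :=
    tsum_mul_left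
  rw [ge_iff_le, step1]
  calc (∑' p : ℕ × ℕ, ψ ((2 * (p.1 + 1) + 1) * n - (p.1 + 1) + p.2))
      ≤ ∑' p, G p := step2
    _ = _ := step3
    _ ≤ _ := step4
    _ = _ := step5
end

section
/- Let ψ : ℕ → ℝ be nonnegative with ∑_{k=1}^∞ k·ψ(k) < ∞, and let n ≥ 1. Then ∑_{k=0}^∞ ∑_{ν=(2k+1)n−k}^∞ ψ(ν) ≤ (1/n)·∑_{k=n}^∞ k·ψ(k). -/
open scoped ENNReal

theorem stmt_1 (ψ : ℕ → ℝ) (hψ : ∀ k, 1 ≤ k → 0 ≤ ψ k)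
    (hsum : Summable (fun k : ℕ => (k : ℝ) * ψ k)) (n : ℕ) (hn : 1 ≤ n) :
    ∑' k : ℕ, ∑' j : ℕ, ψ ((2 * k + 1) * n - k + j) ≤
      (1 / (n : ℝ)) * ∑' k : ℕ, ((k + n : ℕ) : ℝ) * ψ (k + n) := by
  set φ : ℕ → ℝ≥0∞ := fun ν => ENNReal.ofReal (ψ ν) with hφ
  set m : ℕ := 2 * n - 1 with hm
  have hm1 : 1 ≤ m := by omega
  have hnm : n ≤ m := by omega
  have ha : ∀ k : ℕ, (2 * k + 1) * n - k = n + k * m := by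
    intro k
    have e1 : (2 * k + 1) * n = k * (2 * n) + n := by ring
    have e2 : k * m = k * (2 * n) - k * 1 := by rw [hm, Nat.mul_sub]
    have e3 : k * 1 ≤ k * (2 * n) := Nat.mul_le_mul_left k (by omega)
    omega
  set c : ℕ → ℕ := fun ν => if n ≤ ν then (ν - n) / m + 1 else 0 with hc
  have hcond : ∀ k ν : ℕ, (n + k * m ≤ ν ↔ k < c ν) := by
    intro k ν
    simp only [hc]
    split_ifs with h
    · rw [Nat.lt_succ_iff, Nat.le_div_iff_mul_le hm1]
      omega
    · constructor
      · intro hle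
        have : (0:ℕ) ≤ k * m := Nat.zero_le _
        omega
      · intro h'; omega
  have hcb : ∀ ν, n ≤ ν → n * c ν ≤ ν := by
    intro ν h
    simp only [hc, if_pos h]
    have h1 : (ν - n) / m * m ≤ ν - n := Nat.div_mul_le_self _ _
    have h2 : n * ((ν - n) / m) ≤ (ν - n) / m * m := by
      rw [Nat.mul_comm]; exact Nat.mul_le_mul_left _ hnm
    have h3 : n * ((ν - n) / m + 1) = n * ((ν - n) / m) + n := by ring
    omega
  set g : ℕ → ℕ → ℝ≥0∞ := fun k ν => if n + k * m ≤ ν then φ ν else 0 with hg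
  set d : ℕ → ℝ≥0∞ := fun ν => if n ≤ ν then (ν : ℝ≥0∞) / n * φ ν else 0 with hd
  have hn0 : (n : ℝ≥0∞) ≠ 0 := Nat.cast_ne_zero.mpr (by omega)
  have hnt : (n : ℝ≥0∞) ≠ ⊤ := ENNReal.natCast_ne_top n
  -- Step 1: rewrite each inner sum as a sum over all ν with an indicator
  have step1 : ∀ k : ℕ, ∑' j : ℕ, φ (n + k * m + j) = ∑' ν : ℕ, g k ν := by
    intro k
    have hinj : Function.Injective (fun j : ℕ => n + k * m + j) := fun a b h => by
      simpa using h
    have hsupp : Function.support (g k) ⊆ Set.range (fun j : ℕ => n + k * m + j) := by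
      intro x hx
      simp only [hg, Function.mem_support] at hx
      by_cases hle : n + k * m ≤ x
      · exact ⟨x - (n + k * m), by show n + k * m + (x - (n + k * m)) = x; omega⟩
      · simp [hle] at hx
    have := hinj.tsum_eq hsupp
    rw [← this]
    refine tsum_congr fun j => ?_
    simp [hg]
  -- Step 3: compute the ν-wise sum over k
  have step3 : ∀ ν : ℕ, ∑' k : ℕ, g k ν = (c ν : ℝ≥0∞) * φ ν := by
    intro ν
    rw [tsum_eq_sum (s := Finset.range (c ν)) (by
      intro k hk
      simp only [Finset.mem_range, not_lt] at hk
      simp only [hg]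
      rw [if_neg]
      rw [hcond]
      omega)]
    have : ∀ k ∈ Finset.range (c ν), g k ν = φ ν := by
      intro k hk
      simp only [Finset.mem_range] at hk
      simp only [hg]
      rw [if_pos ((hcond k ν).mpr hk)]
    rw [Finset.sum_congr rfl this, Finset.sum_const, Finset.card_range, nsmul_eq_mul]
  -- Step 4: termwise bound
  have step4 : ∀ ν : ℕ, (c ν : ℝ≥0∞) * φ ν ≤ d ν := by
    intro ν
    simp only [hd]
    split_ifs with h
    · refine mul_le_mul_left ?_ _
      rw [ENNReal.le_div_iff_mul_le (Or.inl hn0) (Or.inl hnt)]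
      have : ((c ν * n : ℕ) : ℝ≥0∞) ≤ (ν : ℕ) := by
        exact_mod_cast (by rw [Nat.mul_comm]; exact hcb ν h : c ν * n ≤ ν)
      simpa using this
    · have : c ν = 0 := by simp [hc, h]
      simp [this]
  -- Step 5: reindex d over ν ≥ n
  have step5 : ∑' ν : ℕ, d ν = ∑' k : ℕ, (((k + n : ℕ)) : ℝ≥0∞) / n * φ (k + n) := by
    have hinj : Function.Injective (fun k : ℕ => k + n) := fun a b h => by simpa using h
    have hsupp : Function.support d ⊆ Set.range (fun k : ℕ => k + n) := by
      intro x hx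
      simp only [hd, Function.mem_support] at hx
      by_cases hle : n ≤ x
      · exact ⟨x - n, by show x - n + n = x; omega⟩
      · simp [hle] at hx
    rw [← hinj.tsum_eq hsupp]
    refine tsum_congr fun k => ?_
    simp only [hd]
    rw [if_pos (by omega)]
  set ER : ℝ≥0∞ := ∑' k : ℕ, (((k + n : ℕ)) : ℝ≥0∞) * φ (k + n) with hER
  -- the ENNReal inequality
  have key : ∑' k : ℕ, ∑' j : ℕ, φ (n + k * m + j) ≤ (1 / (n : ℝ≥0∞)) * ER := by
    calc ∑' k : ℕ, ∑' j : ℕ, φ (n + k * m + j)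
        = ∑' k : ℕ, ∑' ν : ℕ, g k ν := by exact tsum_congr step1
      _ = ∑' ν : ℕ, ∑' k : ℕ, g k ν := ENNReal.tsum_comm
      _ = ∑' ν : ℕ, (c ν : ℝ≥0∞) * φ ν := tsum_congr step3
      _ ≤ ∑' ν : ℕ, d ν := ENNReal.tsum_le_tsum step4
      _ = ∑' k : ℕ, (((k + n : ℕ)) : ℝ≥0∞) / n * φ (k + n) := step5
      _ = ∑' k : ℕ, (1 / (n : ℝ≥0∞)) * ((((k + n : ℕ)) : ℝ≥0∞) * φ (k + n)) := by
          refine tsum_congr fun k => ?_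
          rw [ENNReal.div_eq_inv_mul, one_div, mul_assoc]
      _ = (1 / (n : ℝ≥0∞)) * ER := ENNReal.tsum_mul_left
  -- summability / finiteness of ER
  have hψn : ∀ k : ℕ, 0 ≤ ((k + n : ℕ) : ℝ) * ψ (k + n) := by
    intro k
    exact mul_nonneg (by positivity) (hψ _ (by omega))
  have hsum' : Summable (fun k : ℕ => ((k + n : ℕ) : ℝ) * ψ (k + n)) :=
    hsum.comp_injective (fun a b h => by simpa using h : Function.Injective (fun k : ℕ => k + n))
  have hER_eq : ER = ENNReal.ofReal (∑' k : ℕ, ((k + n : ℕ) : ℝ) * ψ (k + n)) := by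
    rw [ENNReal.ofReal_tsum_of_nonneg hψn hsum']
    refine tsum_congr fun k => ?_
    simp only [hφ]
    rw [← ENNReal.ofReal_natCast (k + n), ← ENNReal.ofReal_mul (by positivity)]
  have hER_ne : ER ≠ ⊤ := by rw [hER_eq]; exact ENNReal.ofReal_ne_top
  have hRHS_ne : (1 / (n : ℝ≥0∞)) * ER ≠ ⊤ := by
    refine ENNReal.mul_ne_top ?_ hER_ne
    rw [one_div]
    exact ENNReal.inv_ne_top.mpr hn0
  -- convert LHS
  have hLHS : ∑' k : ℕ, ∑' j : ℕ, ψ ((2 * k + 1) * n - k + j)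
      = (∑' k : ℕ, ∑' j : ℕ, φ (n + k * m + j)).toReal := by
    have hfin : ∀ k : ℕ, (∑' j : ℕ, φ (n + k * m + j)) ≠ ⊤ := by
      intro k
      exact ne_top_of_le_ne_top hRHS_ne (le_trans (ENNReal.le_tsum k) key)
    rw [ENNReal.tsum_toReal_eq hfin]
    refine tsum_congr fun k => ?_
    rw [ENNReal.tsum_toReal_eq (fun j => ENNReal.ofReal_ne_top)]
    refine tsum_congr fun j => ?_
    rw [ha k]
    exact (ENNReal.toReal_ofReal (hψ _ (by omega))).symm
  -- convert RHS
  have hRHS : (1 / (n : ℝ)) * ∑' k : ℕ, ((k + n : ℕ) : ℝ) * ψ (k + n)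
      = ((1 / (n : ℝ≥0∞)) * ER).toReal := by
    rw [ENNReal.toReal_mul, hER_eq, ENNReal.toReal_ofReal (tsum_nonneg hψn)]
    congr 1
    rw [one_div, one_div, ENNReal.toReal_inv, ENNReal.toReal_natCast]
  rw [hLHS, hRHS]
  exact ENNReal.toReal_mono hRHS_ne key
end

section
/- Let 1 > q₁ > q₂ > 0 and define ψ(k) = q₁^k for odd k and ψ(k) = q₂^k for even k. Then lim_{n→∞} [ (1/n)·∑_{k=1}^∞ k·ψ(k+n) ] / [ ∑_{k=n}^∞ ψ(k) ] = 0. -/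
theorem stmt_8 (q₁ q₂ : ℝ) (hq₁ : q₁ < 1) (h12 : q₂ < q₁) (hq₂ : 0 < q₂)
    (ψ : ℕ → ℝ) (hψ : ∀ k, 1 ≤ k → ψ k = if Odd k then q₁ ^ k else q₂ ^ k) :
    Filter.Tendsto
      (fun n : ℕ =>
        ((1 / (n : ℝ)) * ∑' k : ℕ, ((k + 1 : ℕ) : ℝ) * ψ (k + 1 + n)) /
          (∑' k : ℕ, ψ (n + k)))
      Filter.atTop (nhds 0) := by
  have hq1pos : 0 < q₁ := hq₂.trans h12
  have hψnonneg : ∀ k, 1 ≤ k → 0 ≤ ψ k := by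
    intro k hk; rw [hψ k hk]; split <;> positivity
  have hψle : ∀ k, 1 ≤ k → ψ k ≤ q₁ ^ k := by
    intro k hk; rw [hψ k hk]; split
    · exact le_refl _
    · exact pow_le_pow_left₀ hq₂.le h12.le k
  have hnorm : ‖q₁‖ < 1 := by rw [Real.norm_eq_abs, abs_of_pos hq1pos]; exact hq₁
  have h1 : Summable (fun n : ℕ => (n : ℝ) * q₁ ^ n) := by
    simpa using summable_pow_mul_geometric_of_norm_lt_one 1 hnorm
  have hCsum : Summable (fun k : ℕ => ((k : ℝ) + 1) * q₁ ^ (k + 1)) := by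
    have := (summable_nat_add_iff 1).2 h1
    simpa [Nat.cast_add] using this
  set C : ℝ := ∑' k : ℕ, ((k : ℝ) + 1) * q₁ ^ (k + 1) with hC
  have hC0 : 0 ≤ C := tsum_nonneg (fun k => by positivity)
  have hgeo : Summable (fun k : ℕ => q₁ ^ k) := summable_geometric_of_lt_one hq1pos.le hq₁
  -- squeeze
  apply squeeze_zero' (g := fun n : ℕ => (C / q₁) * (1 / (n : ℝ)))
  · filter_upwards [Filter.eventually_ge_atTop 1] with n hn
    have hnum : 0 ≤ ∑' k : ℕ, ((k + 1 : ℕ) : ℝ) * ψ (k + 1 + n) :=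
      tsum_nonneg (fun k => mul_nonneg (by positivity) (hψnonneg _ (by omega)))
    have hden : 0 ≤ ∑' k : ℕ, ψ (n + k) :=
      tsum_nonneg (fun k => hψnonneg _ (by omega))
    exact div_nonneg (mul_nonneg (by positivity) hnum) hden
  · filter_upwards [Filter.eventually_ge_atTop 1] with n hn
    -- summability of the two series
    have hDsum : Summable (fun k : ℕ => ψ (n + k)) := by
      apply Summable.of_nonneg_of_le (fun k => hψnonneg _ (by omega))
        (fun k => hψle _ (by omega))
      have : Summable (fun k : ℕ => q₁ ^ n * q₁ ^ k) := hgeo.mul_left _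
      simpa [pow_add] using this
    have hNbig : Summable (fun k : ℕ => q₁ ^ n * (((k : ℝ) + 1) * q₁ ^ (k + 1))) :=
      hCsum.mul_left _
    have hkey : ∀ k : ℕ, ((k + 1 : ℕ) : ℝ) * ψ (k + 1 + n)
        ≤ q₁ ^ n * (((k : ℝ) + 1) * q₁ ^ (k + 1)) := by
      intro k
      have h1 : ψ (k + 1 + n) ≤ q₁ ^ (k + 1 + n) := hψle _ (by omega)
      have h2 : ((k + 1 : ℕ) : ℝ) * ψ (k + 1 + n) ≤ ((k : ℝ) + 1) * q₁ ^ (k + 1 + n) := by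
        push_cast
        exact mul_le_mul_of_nonneg_left h1 (by positivity)
      calc ((k + 1 : ℕ) : ℝ) * ψ (k + 1 + n) ≤ ((k : ℝ) + 1) * q₁ ^ (k + 1 + n) := h2
        _ = q₁ ^ n * (((k : ℝ) + 1) * q₁ ^ (k + 1)) := by rw [pow_add]; ring
    have hNsum : Summable (fun k : ℕ => ((k + 1 : ℕ) : ℝ) * ψ (k + 1 + n)) :=
      Summable.of_nonneg_of_le
        (fun k => mul_nonneg (by positivity) (hψnonneg _ (by omega))) hkey hNbig
    -- numerator bound
    have hN : (∑' k : ℕ, ((k + 1 : ℕ) : ℝ) * ψ (k + 1 + n)) ≤ q₁ ^ n * C := by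
      calc (∑' k : ℕ, ((k + 1 : ℕ) : ℝ) * ψ (k + 1 + n))
          ≤ ∑' k : ℕ, q₁ ^ n * (((k : ℝ) + 1) * q₁ ^ (k + 1)) :=
            Summable.tsum_le_tsum hkey hNsum hNbig
        _ = q₁ ^ n * C := tsum_mul_left
    have hNnonneg : 0 ≤ ∑' k : ℕ, ((k + 1 : ℕ) : ℝ) * ψ (k + 1 + n) :=
      tsum_nonneg (fun k => mul_nonneg (by positivity) (hψnonneg _ (by omega)))
    -- denominator bound: there is j ∈ {0,1} with n + j odd
    have hD : q₁ ^ (n + 1) ≤ ∑' k : ℕ, ψ (n + k) := by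
      rcases Nat.even_or_odd n with he | ho
      · have : ψ (n + 1) = q₁ ^ (n + 1) := by
          rw [hψ _ (by omega), if_pos (Even.add_one he)]
        calc q₁ ^ (n + 1) = ψ (n + 1) := this.symm
          _ ≤ ∑' k : ℕ, ψ (n + k) :=
            Summable.le_tsum hDsum 1 (fun j _ => hψnonneg _ (by omega))
      · have hpn : ψ (n + 0) = q₁ ^ n := by
          rw [hψ _ (by omega)]; simp [ho]
        calc q₁ ^ (n + 1) ≤ q₁ ^ n := pow_le_pow_of_le_one hq1pos.le hq₁.le (by omega)
          _ = ψ (n + 0) := hpn.symm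
          _ ≤ ∑' k : ℕ, ψ (n + k) :=
            Summable.le_tsum hDsum 0 (fun j _ => hψnonneg _ (by omega))
    have hn' : (0 : ℝ) < n := by exact_mod_cast hn
    have hdenpos : (0 : ℝ) < q₁ ^ (n + 1) := by positivity
    calc ((1 / (n : ℝ)) * ∑' k : ℕ, ((k + 1 : ℕ) : ℝ) * ψ (k + 1 + n)) /
          (∑' k : ℕ, ψ (n + k))
        ≤ ((1 / (n : ℝ)) * (q₁ ^ n * C)) / q₁ ^ (n + 1) := by
          apply div_le_div₀ (by positivity)
            (mul_le_mul_of_nonneg_left hN (by positivity)) hdenpos hD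
      _ = (C / q₁) * (1 / (n : ℝ)) := by
          rw [pow_succ]
          field_simp
  · have : Filter.Tendsto (fun n : ℕ => 1 / (n : ℝ)) Filter.atTop (nhds 0) :=
      tendsto_one_div_atTop_nhds_zero_nat
    simpa using this.const_mul (C / q₁)
end

section
/- Let ψ : ℕ → ℝ be positive with lim_{k→∞} ψ(k+1)/ψ(k) = 0 and ∑_{k=1}^∞ k·ψ(k) < ∞. Then lim_{n→∞} [ (1/n)·∑_{k=n+1}^∞ k·ψ(k) ] / ψ(n) = 0. -/
theorem stmt_9 (ψ : ℕ → ℝ) (hψ : ∀ k, 1 ≤ k → 0 < ψ k)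
    (hD0 : Filter.Tendsto (fun k : ℕ => ψ (k + 1) / ψ k) Filter.atTop (nhds 0))
    (hsum : Summable (fun k : ℕ => (k : ℝ) * ψ k)) :
    Filter.Tendsto
      (fun n : ℕ =>
        ((1 / (n : ℝ)) * ∑' k : ℕ, ((n + 1 + k : ℕ) : ℝ) * ψ (n + 1 + k)) / ψ n)
      Filter.atTop (nhds 0) := by
  -- auxiliary summable facts
  have hhalf : ‖(1/2 : ℝ)‖ < 1 := by norm_num
  have hg : Summable (fun k : ℕ => ((k : ℝ) + 2) * (1/2 : ℝ)^k) := by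
    have h1 : Summable (fun k : ℕ => (k : ℝ) * (1/2 : ℝ)^k) := by
      simpa using summable_pow_mul_geometric_of_norm_lt_one 1 hhalf
    have h2 : Summable (fun k : ℕ => (2 : ℝ) * (1/2 : ℝ)^k) :=
      (summable_geometric_of_lt_one (by norm_num) (by norm_num)).mul_left 2
    simpa [add_mul] using h1.add h2
  have hC : (∑' k : ℕ, ((k : ℝ) + 2) * (1/2 : ℝ)^k) = 6 := by
    have h1 : Summable (fun k : ℕ => (k : ℝ) * (1/2 : ℝ)^k) := by
      simpa using summable_pow_mul_geometric_of_norm_lt_one 1 hhalf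
    have h2 : Summable (fun k : ℕ => (2 : ℝ) * (1/2 : ℝ)^k) :=
      (summable_geometric_of_lt_one (by norm_num) (by norm_num)).mul_left 2
    have e1 : (∑' k : ℕ, (k : ℝ) * (1/2 : ℝ)^k) = 2 := by
      rw [tsum_coe_mul_geometric_of_norm_lt_one hhalf]; norm_num
    have e2 : (∑' k : ℕ, (2 : ℝ) * (1/2 : ℝ)^k) = 4 := by
      rw [tsum_mul_left, tsum_geometric_of_lt_one (by norm_num) (by norm_num)]; norm_num
    calc (∑' k : ℕ, ((k : ℝ) + 2) * (1/2 : ℝ)^k)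
        = ∑' k : ℕ, ((k : ℝ) * (1/2 : ℝ)^k + 2 * (1/2 : ℝ)^k) := by
          congr 1; funext k; ring
      _ = 2 + 4 := by rw [Summable.tsum_add h1 h2, e1, e2]
      _ = 6 := by norm_num
  rw [NormedAddCommGroup.tendsto_nhds_zero]
  intro ε hε
  set δ : ℝ := min (ε / 7) (1/2) with hδdef
  have hδpos : 0 < δ := lt_min (by positivity) (by norm_num)
  have hδhalf : δ ≤ 1/2 := min_le_right _ _
  have h6δ : 6 * δ < ε := by
    have : δ ≤ ε / 7 := min_le_left _ _
    nlinarith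
  -- eventual ratio bound
  have hev : ∀ᶠ n in Filter.atTop, ψ (n + 1) / ψ n < δ := by
    have := hD0.eventually (gt_mem_nhds hδpos)
    simpa using this
  obtain ⟨N, hN⟩ := Filter.eventually_atTop.1 hev
  set M := max N 1 with hM
  filter_upwards [Filter.eventually_ge_atTop M] with n hn
  have hn1 : 1 ≤ n := le_trans (le_max_right N 1) hn
  have hnN : N ≤ n := le_trans (le_max_left N 1) hn
  have hψn : 0 < ψ n := hψ n hn1
  have hnR : (1 : ℝ) ≤ (n : ℝ) := by exact_mod_cast hn1
  have hnpos : (0 : ℝ) < n := by linarith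
  -- key pointwise bound
  have hkey : ∀ k : ℕ, ψ (n + 1 + k) ≤ δ ^ (k + 1) * ψ n := by
    intro k
    induction k with
    | zero =>
        have h := hN n hnN
        have := (div_lt_iff₀ hψn).1 h
        simpa [pow_one] using this.le
    | succ k ih =>
        have hpos : 0 < ψ (n + 1 + k) := hψ _ (by omega)
        have h := hN (n + 1 + k) (by omega)
        have h' : ψ (n + 1 + k + 1) ≤ δ * ψ (n + 1 + k) := ((div_lt_iff₀ hpos).1 h).le
        have : ψ (n + 1 + (k + 1)) ≤ δ * (δ ^ (k + 1) * ψ n) := by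
          have : ψ (n + 1 + (k + 1)) = ψ (n + 1 + k + 1) := by ring_nf
          rw [this]
          calc ψ (n + 1 + k + 1) ≤ δ * ψ (n + 1 + k) := h'
            _ ≤ δ * (δ ^ (k + 1) * ψ n) := by
                exact mul_le_mul_of_nonneg_left ih hδpos.le
        calc ψ (n + 1 + (k + 1)) ≤ δ * (δ ^ (k + 1) * ψ n) := this
          _ = δ ^ (k + 1 + 1) * ψ n := by ring
  -- summabilities
  have hS1 : Summable (fun k : ℕ => ((n + 1 + k : ℕ) : ℝ) * ψ (n + 1 + k)) :=
    hsum.comp_injective (fun a b h => by omega)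
  have hS2 : Summable (fun k : ℕ =>
      ((n : ℝ) * δ * ψ n) * (((k : ℝ) + 2) * (1/2 : ℝ)^k)) := hg.mul_left _
  -- tsum bound
  have htsum : (∑' k : ℕ, ((n + 1 + k : ℕ) : ℝ) * ψ (n + 1 + k))
      ≤ (n : ℝ) * δ * ψ n * (∑' k : ℕ, ((k : ℝ) + 2) * (1/2 : ℝ)^k) := by
    rw [← tsum_mul_left]
    refine Summable.tsum_le_tsum (fun k => ?_) hS1 hS2
    have hb1 : ((n + 1 + k : ℕ) : ℝ) ≤ (n : ℝ) * ((k : ℝ) + 2) := by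
      push_cast
      nlinarith [Nat.cast_nonneg (α := ℝ) k]
    have hb2 : ψ (n + 1 + k) ≤ δ * (1/2 : ℝ)^k * ψ n := by
      refine (hkey k).trans ?_
      have : δ ^ (k + 1) ≤ δ * (1/2 : ℝ)^k := by
        rw [pow_succ']
        exact mul_le_mul_of_nonneg_left (pow_le_pow_left₀ hδpos.le hδhalf k) hδpos.le
      exact mul_le_mul_of_nonneg_right this hψn.le
    calc ((n + 1 + k : ℕ) : ℝ) * ψ (n + 1 + k)
        ≤ ((n : ℝ) * ((k : ℝ) + 2)) * (δ * (1/2 : ℝ)^k * ψ n) := by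
          refine mul_le_mul hb1 hb2 (le_of_lt (hψ _ (by omega))) (by positivity)
      _ = (n : ℝ) * δ * ψ n * (((k : ℝ) + 2) * (1/2 : ℝ)^k) := by ring
  rw [hC] at htsum
  -- conclude
  have hT0 : 0 ≤ ∑' k : ℕ, ((n + 1 + k : ℕ) : ℝ) * ψ (n + 1 + k) :=
    tsum_nonneg fun k => mul_nonneg (by positivity) (hψ _ (by omega)).le
  have hfnonneg : 0 ≤ (1 / (n : ℝ) * ∑' k : ℕ, ((n + 1 + k : ℕ) : ℝ) * ψ (n + 1 + k)) / ψ n := by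
    positivity
  rw [Real.norm_eq_abs, abs_of_nonneg hfnonneg]
  have hstep : (1 / (n : ℝ)) * (∑' k : ℕ, ((n + 1 + k : ℕ) : ℝ) * ψ (n + 1 + k))
      ≤ δ * ψ n * 6 := by
    have := mul_le_mul_of_nonneg_left htsum (by positivity : (0:ℝ) ≤ 1 / (n : ℝ))
    calc (1 / (n : ℝ)) * (∑' k : ℕ, ((n + 1 + k : ℕ) : ℝ) * ψ (n + 1 + k))
        ≤ (1 / (n : ℝ)) * ((n : ℝ) * δ * ψ n * 6) := this
      _ = δ * ψ n * 6 := by field_simp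
  calc (1 / (n : ℝ) * ∑' k : ℕ, ((n + 1 + k : ℕ) : ℝ) * ψ (n + 1 + k)) / ψ n
      ≤ (δ * ψ n * 6) / ψ n := by
        gcongr
    _ = 6 * δ := by field_simp
    _ < ε := h6δ
end

section
/- Let α > 0 and 0 < r < 1, and set ψ(k) = e^{−αk^r}. Then lim_{n→∞} [ (1/n)·∑_{k=1}^∞ k·ψ(k+n) ] / [ ∑_{k=n}^∞ ψ(k) ] = 0. -/
/-!
Put `ψ N = exp (-α N ^ r)`. By concavity of `x ↦ x ^ r`, `(N + j) ^ r - N ^ r` is at least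
`(2 ^ r - 1) j N ^ (r - 1)` for `j ≤ N` and at least `(1 - 2 ^ (-r)) j ^ r` for `j ≥ N`.
Hence the numerator series is at most `ψ N (∑ j q ^ j + K)` with `1 - q ≍ N ^ (r - 1)` and `K`
independent of `N`, i.e. it is `O (ψ N N ^ (2 (1 - r)))`. On the other hand
`(N + k) ^ r ≤ N ^ r + r` for `k ≤ N ^ (1 - r)`, so the tail `∑_{k ≥ N} ψ k` is at least
`N ^ (1 - r) ψ N exp (-α r)`. The ratio is therefore `O (N ^ (-r))`.
-/

open Real Filter Asymptotics

theorem summable_rpow_mul_exp_neg_mul_rpow (s : ℝ) {c r : ℝ} (hc : 0 < c) (hr : 0 < r) :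
    Summable fun j : ℕ => (j : ℝ) ^ s * exp (-c * (j : ℝ) ^ r) := by
  have hjr : Tendsto (fun j : ℕ => (j : ℝ) ^ r) atTop atTop :=
    (tendsto_rpow_atTop hr).comp tendsto_natCast_atTop_atTop
  have hexp : (fun j : ℕ => exp (-c * (j : ℝ) ^ r)) =o[atTop]
      fun j : ℕ => (j : ℝ) ^ (-(s + 2)) := by
    refine ((isLittleO_exp_neg_mul_rpow_atTop hc (-(s + 2) / r)).comp_tendsto hjr).congr_right ?_
    intro j
    simp only [Function.comp_apply]
    rw [← rpow_mul (Nat.cast_nonneg j), mul_div_cancel₀ _ hr.ne']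
  refine summable_of_isBigO_nat (Real.summable_nat_rpow.mpr (by norm_num : (-2 : ℝ) < -1)) ?_
  refine ((isBigO_refl (fun j : ℕ => (j : ℝ) ^ s) atTop).mul hexp.isBigO).congr'
    EventuallyEq.rfl ?_
  filter_upwards [eventually_gt_atTop 0] with j hj
  rw [← rpow_add (by exact_mod_cast hj)]
  ring_nf

theorem one_add_mul_le_one_add_rpow {r s : ℝ} (hr0 : 0 ≤ r) (hr1 : r ≤ 1) (hs0 : 0 ≤ s)
    (hs1 : s ≤ 1) : 1 + ((2 : ℝ) ^ r - 1) * s ≤ (1 + s) ^ r := by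
  have h := (concaveOn_rpow hr0 hr1).2 (Set.mem_Ici.mpr zero_le_one)
    (Set.mem_Ici.mpr zero_le_two) (sub_nonneg.mpr hs1) hs0 (sub_add_cancel 1 s)
  simp only [smul_eq_mul, one_rpow, mul_one] at h
  rw [show 1 - s + s * 2 = 1 + s by ring] at h
  linarith

theorem add_rpow_le_rpow_add_mul {r N j : ℝ} (hr0 : 0 ≤ r) (hr1 : r ≤ 1) (hN : 0 < N)
    (hj : 0 ≤ j) : (N + j) ^ r ≤ N ^ r + r * j * N ^ (r - 1) := by
  have hjN : -1 ≤ j / N := by linarith [div_nonneg hj hN.le]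
  have h := rpow_one_add_le_one_add_mul_self hjN hr0 hr1
  calc (N + j) ^ r = N ^ r * (1 + j / N) ^ r := by
        rw [← mul_rpow hN.le (by positivity)]; field_simp
    _ ≤ N ^ r * (1 + r * (j / N)) := by gcongr
    _ = N ^ r + r * j * N ^ (r - 1) := by rw [rpow_sub_one hN.ne']; field_simp

theorem rpow_add_mul_le_add_rpow {r N j : ℝ} (hr0 : 0 ≤ r) (hr1 : r ≤ 1) (hN : 0 < N)
    (hj : 0 ≤ j) (hjN : j ≤ N) :
    N ^ r + ((2 : ℝ) ^ r - 1) * j * N ^ (r - 1) ≤ (N + j) ^ r := by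
  have h := one_add_mul_le_one_add_rpow hr0 hr1 (div_nonneg hj hN.le) ((div_le_one hN).mpr hjN)
  calc N ^ r + ((2 : ℝ) ^ r - 1) * j * N ^ (r - 1)
      = N ^ r * (1 + ((2 : ℝ) ^ r - 1) * (j / N)) := by rw [rpow_sub_one hN.ne']; field_simp
    _ ≤ N ^ r * (1 + j / N) ^ r := by gcongr
    _ = (N + j) ^ r := by rw [← mul_rpow hN.le (by positivity)]; field_simp

theorem rpow_add_mul_rpow_le_add_rpow {r N j : ℝ} (hr : 0 ≤ r) (hN : 0 ≤ N) (hNj : N ≤ j) :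
    N ^ r + (1 - (2 : ℝ) ^ (-r)) * j ^ r ≤ (N + j) ^ r := by
  have h2 : (2 : ℝ) ^ (-r) * (2 : ℝ) ^ r = 1 := by rw [← rpow_add two_pos]; simp
  have hN2 : (2 : ℝ) ^ r * N ^ r ≤ (N + j) ^ r := by
    rw [← mul_rpow zero_le_two hN]; gcongr; linarith
  have hj : j ^ r ≤ (N + j) ^ r := by gcongr <;> linarith
  have h2r : (2 : ℝ) ^ (-r) ≤ 1 :=
    rpow_le_one_of_one_le_of_nonpos one_le_two (neg_nonpos.mpr hr)
  have hN2' : N ^ r ≤ (2 : ℝ) ^ (-r) * (N + j) ^ r := by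
    calc N ^ r = (2 : ℝ) ^ (-r) * ((2 : ℝ) ^ r * N ^ r) := by rw [← mul_assoc, h2, one_mul]
      _ ≤ _ := by gcongr
  nlinarith

theorem tsum_coe_mul_exp_neg_pow_le {t : ℝ} (ht : 0 < t) :
    ∑' j : ℕ, (j : ℝ) * exp (-t) ^ j ≤ (1 + 1 / t) ^ 2 := by
  set x := exp (-t)
  have hx0 : 0 < x := exp_pos _
  have hx1 : x < 1 := exp_lt_one_iff.mpr (neg_lt_zero.mpr ht)
  have hxt : x * (1 + t) ≤ 1 := by
    calc x * (1 + t) ≤ x * exp t := by gcongr; linarith [add_one_le_exp t]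
      _ = 1 := by rw [← exp_add, neg_add_cancel, exp_zero]
  have hinv : 1 / (1 - x) ≤ 1 + 1 / t := by
    rw [div_le_iff₀ (by linarith)]
    field_simp
    nlinarith
  rw [tsum_coe_mul_geometric_of_norm_lt_one (by rwa [norm_of_nonneg hx0.le])]
  calc x / (1 - x) ^ 2 ≤ 1 / (1 - x) ^ 2 := by gcongr
    _ = (1 / (1 - x)) ^ 2 := by rw [div_pow, one_pow]
    _ ≤ (1 + 1 / t) ^ 2 := by gcongr

theorem exp_neg_mul_add_rpow_le {α r N j : ℝ} (hα : 0 ≤ α) (hr0 : 0 ≤ r) (hr1 : r ≤ 1)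
    (hN : 0 < N) (hj : 0 ≤ j) :
    exp (-α * (N + j) ^ r) ≤ exp (-α * N ^ r) *
      (exp (-(α * ((2 : ℝ) ^ r - 1) * N ^ (r - 1)) * j) +
        exp (-(α * (1 - (2 : ℝ) ^ (-r))) * j ^ r)) := by
  rw [mul_add, ← exp_add, ← exp_add]
  rcases le_total j N with hjN | hNj
  · have h := mul_le_mul_of_nonneg_left (rpow_add_mul_le_add_rpow hr0 hr1 hN hj hjN) hα
    refine le_add_of_le_of_nonneg (exp_le_exp.mpr ?_) (exp_nonneg _)
    linarith
  · have h := mul_le_mul_of_nonneg_left (rpow_add_mul_rpow_le_add_rpow hr0 hN.le hNj) hα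
    refine le_add_of_nonneg_of_le (exp_nonneg _) (exp_le_exp.mpr ?_)
    linarith

theorem rpow_mul_exp_le_tsum_exp_neg_mul_rpow {α r : ℝ} (hα : 0 < α) (hr0 : 0 < r)
    (hr1 : r ≤ 1) {n : ℕ} (hn : 0 < n) :
    (n : ℝ) ^ (1 - r) * (exp (-α * (n : ℝ) ^ r) * exp (-(α * r))) ≤
      ∑' k : ℕ, exp (-α * ((n + k : ℕ) : ℝ) ^ r) := by
  set N : ℝ := (n : ℝ)
  have hN : 0 < N := Nat.cast_pos.mpr hn
  have hsum : Summable fun k : ℕ => exp (-α * ((n + k : ℕ) : ℝ) ^ r) := by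
    have h := summable_rpow_mul_exp_neg_mul_rpow 0 hα hr0
    simp only [rpow_zero, one_mul] at h
    exact ((summable_nat_add_iff n).mpr h).congr fun k => by rw [add_comm]
  set m := ⌈N ^ (1 - r)⌉₊
  have hterm : ∀ k ∈ Finset.range m,
      exp (-α * N ^ r) * exp (-(α * r)) ≤ exp (-α * ((n + k : ℕ) : ℝ) ^ r) := by
    intro k hk
    have hkm : (k : ℝ) + 1 ≤ m := by exact_mod_cast Finset.mem_range.mp hk
    have hk : (k : ℝ) ≤ N ^ (1 - r) := by
      linarith [Nat.ceil_lt_add_one (rpow_nonneg hN.le (1 - r))]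
    have hup : (N + k) ^ r ≤ N ^ r + r := by
      calc (N + k) ^ r ≤ N ^ r + r * k * N ^ (r - 1) :=
            add_rpow_le_rpow_add_mul hr0.le hr1 hN k.cast_nonneg
        _ ≤ N ^ r + r * N ^ (1 - r) * N ^ (r - 1) := by gcongr
        _ = N ^ r + r := by rw [mul_assoc, ← rpow_add hN]; norm_num
    rw [← exp_add, Nat.cast_add]
    exact exp_le_exp.mpr (by nlinarith)
  calc N ^ (1 - r) * (exp (-α * N ^ r) * exp (-(α * r)))
      ≤ m * (exp (-α * N ^ r) * exp (-(α * r))) := by gcongr; exact Nat.le_ceil _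
    _ = ∑ _k ∈ Finset.range m, exp (-α * N ^ r) * exp (-(α * r)) := by simp
    _ ≤ ∑ k ∈ Finset.range m, exp (-α * ((n + k : ℕ) : ℝ) ^ r) := Finset.sum_le_sum hterm
    _ ≤ _ := hsum.sum_le_tsum _ fun _ _ => (exp_pos _).le

theorem tsum_mul_exp_neg_mul_rpow_le {α r : ℝ} (hα : 0 < α) (hr0 : 0 < r) (hr1 : r ≤ 1)
    {n : ℕ} (hn : 0 < n) :
    ∑' k : ℕ, ((k + 1 : ℕ) : ℝ) * exp (-α * ((k + 1 + n : ℕ) : ℝ) ^ r) ≤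
      exp (-α * (n : ℝ) ^ r) * ((1 + 1 / (α * ((2 : ℝ) ^ r - 1) * (n : ℝ) ^ (r - 1))) ^ 2 +
        ∑' j : ℕ, (j : ℝ) * exp (-(α * (1 - (2 : ℝ) ^ (-r))) * (j : ℝ) ^ r)) := by
  set N : ℝ := (n : ℝ)
  have hN : 0 < N := Nat.cast_pos.mpr hn
  set ψ := exp (-α * N ^ r)
  set t := α * ((2 : ℝ) ^ r - 1) * N ^ (r - 1)
  have ht : 0 < t := by
    have := one_lt_rpow one_lt_two hr0
    have := rpow_pos_of_pos hN (r - 1)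
    positivity
  set c := α * (1 - (2 : ℝ) ^ (-r))
  have hc : 0 < c :=
    mul_pos hα (sub_pos.mpr (rpow_lt_one_of_one_lt_of_neg one_lt_two (neg_neg_of_pos hr0)))
  have hK : Summable fun j : ℕ => (j : ℝ) * exp (-c * (j : ℝ) ^ r) := by
    simpa only [rpow_one] using summable_rpow_mul_exp_neg_mul_rpow 1 hc hr0
  have hgeom : Summable fun j : ℕ => (j : ℝ) * exp (-t) ^ j :=
    (hasSum_coe_mul_geometric_of_norm_lt_one
      (by rw [norm_of_nonneg (exp_pos _).le]; exact exp_lt_one_iff.mpr (by linarith))).summable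
  set F := fun j : ℕ => (j : ℝ) * exp (-α * ((j + n : ℕ) : ℝ) ^ r)
  set G := fun j : ℕ => ψ * ((j : ℝ) * exp (-t) ^ j + (j : ℝ) * exp (-c * (j : ℝ) ^ r))
  have hF0 : ∀ j, 0 ≤ F j := fun j => by positivity
  have hFG : ∀ j, F j ≤ G j := by
    intro j
    have h := exp_neg_mul_add_rpow_le hα.le hr0.le hr1 hN j.cast_nonneg
    have hpow : exp (-t) ^ j = exp (-t * j) := by rw [← exp_nat_mul, mul_comm]
    calc F j = j * exp (-α * (N + j) ^ r) := by
          simp only [F, Nat.cast_add, add_comm (j : ℝ)]; rfl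
      _ ≤ j * (ψ * (exp (-t * j) + exp (-c * (j : ℝ) ^ r))) := by gcongr
      _ = G j := by simp only [G, hpow]; ring
  have hG : Summable G := (hgeom.add hK).mul_left ψ
  have hF : Summable F := hG.of_nonneg_of_le hF0 hFG
  calc ∑' k : ℕ, F (k + 1) ≤ ∑' j, F j :=
        tsum_comp_le_tsum_of_inj hF hF0 (add_left_injective 1)
    _ ≤ ∑' j, G j := hF.tsum_le_tsum hFG hG
    _ = ψ * (∑' j : ℕ, (j : ℝ) * exp (-t) ^ j +
          ∑' j : ℕ, (j : ℝ) * exp (-c * (j : ℝ) ^ r)) := by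
      rw [tsum_mul_left, hgeom.tsum_add hK]
    _ ≤ _ := by gcongr; exact tsum_coe_mul_exp_neg_pow_le ht

theorem exists_tsum_mul_exp_neg_mul_rpow_le {α r : ℝ} (hα : 0 < α) (hr0 : 0 < r)
    (hr1 : r ≤ 1) : ∃ C, ∀ n : ℕ, 0 < n →
      ∑' k : ℕ, ((k + 1 : ℕ) : ℝ) * exp (-α * ((k + 1 + n : ℕ) : ℝ) ^ r) ≤
        C * exp (-α * (n : ℝ) ^ r) * ((n : ℝ) ^ (1 - r)) ^ 2 := by
  set b := α * ((2 : ℝ) ^ r - 1)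
  have hb : 0 < b := mul_pos hα (sub_pos.mpr (one_lt_rpow one_lt_two hr0))
  set K := ∑' j : ℕ, (j : ℝ) * exp (-(α * (1 - (2 : ℝ) ^ (-r))) * (j : ℝ) ^ r)
  have hK : 0 ≤ K := tsum_nonneg fun j => by positivity
  refine ⟨(1 + 1 / b) ^ 2 + K, fun n hn => ?_⟩
  have hN : (0 : ℝ) < n := Nat.cast_pos.mpr hn
  set M := (n : ℝ) ^ (1 - r)
  have hM : 1 ≤ M := one_le_rpow (Nat.one_le_cast.mpr hn) (by linarith)
  have ht : b * (n : ℝ) ^ (r - 1) = b / M := by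
    rw [eq_div_iff (by positivity), mul_assoc, ← rpow_add hN]; norm_num
  have h1 : 1 + 1 / (b * (n : ℝ) ^ (r - 1)) ≤ (1 + 1 / b) * M := by
    rw [ht, one_div_div]; nlinarith [show M / b = 1 / b * M by ring]
  have hbound : (1 + 1 / (b * (n : ℝ) ^ (r - 1))) ^ 2 + K ≤ ((1 + 1 / b) ^ 2 + K) * M ^ 2 := by
    nlinarith [pow_le_pow_left₀ (by positivity) h1 2,
      mul_le_mul_of_nonneg_left (one_le_pow₀ hM : 1 ≤ M ^ 2) hK]
  calc _ ≤ exp (-α * (n : ℝ) ^ r) * ((1 + 1 / (b * (n : ℝ) ^ (r - 1))) ^ 2 + K) :=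
        tsum_mul_exp_neg_mul_rpow_le hα hr0 hr1 hn
    _ ≤ exp (-α * (n : ℝ) ^ r) * (((1 + 1 / b) ^ 2 + K) * M ^ 2) := by gcongr
    _ = _ := by ring

theorem stmt_14 (α r : ℝ) (hα : 0 < α) (hr0 : 0 < r) (hr1 : r < 1) :
    Filter.Tendsto
      (fun n : ℕ =>
        ((1 / (n : ℝ)) *
            ∑' k : ℕ, ((k + 1 : ℕ) : ℝ) * Real.exp (-α * ((k + 1 + n : ℕ) : ℝ) ^ r)) /
          (∑' k : ℕ, Real.exp (-α * ((n + k : ℕ) : ℝ) ^ r)))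
      Filter.atTop (nhds 0) := by
  obtain ⟨C, hnum⟩ := exists_tsum_mul_exp_neg_mul_rpow_le hα hr0 hr1.le
  refine squeeze_zero' (g := fun n : ℕ => C * exp (α * r) * (n : ℝ) ^ (-r))
    (Eventually.of_forall fun n => by positivity) ?_ ?_
  · filter_upwards [eventually_gt_atTop 0] with n hn
    have hN : (0 : ℝ) < n := Nat.cast_pos.mpr hn
    have hden := rpow_mul_exp_le_tsum_exp_neg_mul_rpow hα hr0 hr1.le hn
    calc _ ≤ (1 / (n : ℝ) * (C * exp (-α * (n : ℝ) ^ r) * ((n : ℝ) ^ (1 - r)) ^ 2)) /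
          ((n : ℝ) ^ (1 - r) * (exp (-α * (n : ℝ) ^ r) * exp (-(α * r)))) := by
          have hnum' := mul_le_mul_of_nonneg_left (hnum n hn) (one_div_pos.mpr hN).le
          refine div_le_div₀ ?_ hnum' (by positivity) hden
          exact (mul_nonneg (by positivity) (tsum_nonneg fun k => by positivity)).trans hnum'
      _ = C * exp (α * r) * (n : ℝ) ^ (-r) := by
          rw [rpow_neg hN.le, rpow_sub hN, rpow_one, exp_neg]
          field_simp
  · simpa using ((tendsto_rpow_neg_atTop hr0).comp tendsto_natCast_atTop_atTop).const_mul
      (C * exp (α * r))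
end

section
/- Let ψ : ℕ → ℝ be nonnegative with ∑_{k=1}^∞ k·ψ(k) < ∞ and n ≥ 1. Then for every real t and every real γ, the series r_n(t) = ∑_{k=1}^∞ ∑_{ν=(2k+1)n−k}^∞ ψ(ν)·sin(νt + (k+1/2)(2n−1)x + βπ/2) converges absolutely and |r_n(t)| ≤ ∑_{k=1}^∞ ∑_{ν=(2k+1)n−k}^∞ ψ(ν) ≤ (1/n)·∑_{k=1}^∞ k·ψ(k+n). -/
@[reducible] def mA17 (n k : ℕ) : ℕ := (2 * (k + 1) + 1) * n - (k + 1)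

theorem aux17 (ψ : ℕ → ℝ) (hψ : ∀ k, 1 ≤ k → 0 ≤ ψ k)
    (hsum : Summable (fun k : ℕ => (k : ℝ) * ψ k)) (n : ℕ) (hn : 1 ≤ n) (θ : ℕ × ℕ → ℝ) :
    Summable (fun p : ℕ × ℕ => |ψ (mA17 n p.1 + p.2) * Real.sin (θ p)|) ∧
    |∑' p : ℕ × ℕ, ψ (mA17 n p.1 + p.2) * Real.sin (θ p)| ≤
      ∑' k : ℕ, ∑' j : ℕ, ψ (mA17 n k + j) ∧
    ∑' k : ℕ, ∑' j : ℕ, ψ (mA17 n k + j) ≤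
      (1 / (n : ℝ)) * ∑' k : ℕ, ((k + 1 : ℕ) : ℝ) * ψ (k + 1 + n) := by
  classical
  have hn0 : 0 < n := hn
  -- basic arithmetic facts about mA17
  have hexp : ∀ k : ℕ, (2 * (k + 1) + 1) * n = 2 * (k * n) + 3 * n := fun k => by ring
  have hm_ge : ∀ k, 3 * n - 1 ≤ mA17 n k := by
    intro k
    have h1 : k ≤ k * n := Nat.le_mul_of_pos_right _ hn0
    have h2 := hexp k
    unfold mA17
    omega
  have hm_le : ∀ k v, mA17 n k ≤ v → n * (k + 2) ≤ v := by
    intro k v hv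
    have h1 : k ≤ k * n := Nat.le_mul_of_pos_right _ hn0
    have h2 := hexp k
    have h3 : n * (k + 2) = k * n + 2 * n := by ring
    unfold mA17 at hv
    omega
  -- the majorant series g
  set g : ℕ → ℝ := fun k => ((k + 1 : ℕ) : ℝ) * ψ (k + 1 + n) with hg
  have hg_nonneg : ∀ k, 0 ≤ g k := by
    intro k
    exact mul_nonneg (by positivity) (hψ _ (by omega))
  have hgsum : Summable g := by
    have h1 : Summable (fun k : ℕ => ((k + 1 + n : ℕ) : ℝ) * ψ (k + 1 + n)) :=
      hsum.comp_injective (i := fun k : ℕ => k + 1 + n) (fun a b h => by simpa using h)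
    refine Summable.of_nonneg_of_le hg_nonneg (fun k => ?_) h1
    exact mul_le_mul_of_nonneg_right (Nat.cast_le.mpr (by omega)) (hψ _ (by omega))
  -- key finite-sum bound
  have key : ∀ s : Finset (ℕ × ℕ), ∑ p ∈ s, ψ (mA17 n p.1 + p.2) ≤ (1 / (n : ℝ)) * ∑' k, g k := by
    intro s
    set ν : ℕ × ℕ → ℕ := fun p => mA17 n p.1 + p.2 with hν
    have hmaps : ∀ p ∈ s, ν p ∈ s.image ν := fun p hp => Finset.mem_image_of_mem ν hp
    rw [← Finset.sum_fiberwise_of_maps_to hmaps (fun p => ψ (ν p))]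
    have hv_ge : ∀ v ∈ s.image ν, 3 * n - 1 ≤ v := by
      intro v hv
      obtain ⟨p, _, hp⟩ := Finset.mem_image.mp hv
      have hp' : mA17 n p.1 + p.2 = v := hp
      have := hm_ge p.1
      omega
    have step1 : ∀ v ∈ s.image ν,
        ∑ p ∈ s.filter (fun p => ν p = v), ψ (ν p) ≤ (1 / (n : ℝ)) * (((v : ℝ) - n) * ψ v) := by
      intro v hv
      have hv3 : 3 * n - 1 ≤ v := hv_ge v hv
      have hψv : 0 ≤ ψ v := hψ v (by omega)
      have hsum_const : ∑ p ∈ s.filter (fun p => ν p = v), ψ (ν p)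
          = ((s.filter (fun p => ν p = v)).card : ℝ) * ψ v := by
        rw [Finset.sum_congr rfl (fun p hp => by rw [(Finset.mem_filter.mp hp).2])]
        rw [Finset.sum_const, nsmul_eq_mul]
      rw [hsum_const]
      set c := (s.filter (fun p => ν p = v)).card with hc
      -- card bound: c ≤ v / n - 1
      have hcard : c ≤ v / n - 1 := by
        have h := Finset.card_le_card_of_injOn (fun p : ℕ × ℕ => p.1)
          (s := s.filter (fun p => ν p = v)) (t := Finset.range (v / n - 1))
          (fun p hp => by
            have hpv : mA17 n p.1 + p.2 = v := (Finset.mem_filter.mp hp).2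
            have h1 : mA17 n p.1 ≤ v := by omega
            have h2 : n * (p.1 + 2) ≤ v := hm_le p.1 v h1
            have h3 : p.1 + 2 ≤ v / n :=
              Nat.le_div_iff_mul_le hn0 |>.mpr (by rwa [Nat.mul_comm] at h2)
            show p.1 ∈ Finset.range (v / n - 1)
            exact Finset.mem_range.mpr (by omega))
          (fun p hp q hq hpq => by
            have hpv : mA17 n p.1 + p.2 = v := (Finset.mem_filter.mp (Finset.mem_coe.mp hp)).2
            have hqv : mA17 n q.1 + q.2 = v := (Finset.mem_filter.mp (Finset.mem_coe.mp hq)).2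
            have hpq1 : p.1 = q.1 := hpq
            have : p.2 = q.2 := by rw [hpq1] at hpv; omega
            exact Prod.ext hpq1 this)
        simpa using h
      -- natural-number inequality n * c ≤ v - n
      have hd : v / n * n ≤ v := Nat.div_mul_le_self v n
      have hcard' : n * c ≤ v - n := by
        rcases Nat.eq_zero_or_pos (v / n) with h0 | hpos
        · have hc0 : c = 0 := by omega
          rw [hc0, Nat.mul_zero]
          exact Nat.zero_le _
        · have h1 : c + 1 ≤ v / n := by omega
          have h2 : n * (c + 1) ≤ n * (v / n) := Nat.mul_le_mul_left _ h1
          have h3 : n * (v / n) = v / n * n := Nat.mul_comm _ _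
          have h4 : n * (c + 1) = n * c + n := by ring
          omega
      have hv_n : n ≤ v := by omega
      have h1 : (n : ℝ) * c ≤ (v : ℝ) - n := by
        have := (Nat.cast_le (α := ℝ)).mpr hcard'
        rwa [Nat.cast_mul, Nat.cast_sub hv_n] at this
      have h2 : (c : ℝ) ≤ ((v : ℝ) - n) / n := by
        rw [le_div_iff₀ (by positivity)]
        linarith
      calc (c : ℝ) * ψ v ≤ (((v : ℝ) - n) / n) * ψ v := mul_le_mul_of_nonneg_right h2 hψv
        _ = (1 / (n : ℝ)) * (((v : ℝ) - n) * ψ v) := by ring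
    calc ∑ v ∈ s.image ν, ∑ p ∈ s.filter (fun p => ν p = v), ψ (ν p)
        ≤ ∑ v ∈ s.image ν, (1 / (n : ℝ)) * (((v : ℝ) - n) * ψ v) := Finset.sum_le_sum step1
      _ = (1 / (n : ℝ)) * ∑ v ∈ s.image ν, ((v : ℝ) - n) * ψ v := by rw [← Finset.mul_sum]
      _ ≤ (1 / (n : ℝ)) * ∑' k, g k := by
          apply mul_le_mul_of_nonneg_left _ (by positivity)
          have heq : ∑ v ∈ s.image ν, ((v : ℝ) - n) * ψ v
              = ∑ v ∈ s.image ν, g (v - (n + 1)) := by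
            refine Finset.sum_congr rfl (fun v hv => ?_)
            have hv3 : 3 * n - 1 ≤ v := hv_ge v hv
            have hv1 : n + 1 ≤ v := by omega
            simp only [hg]
            rw [show v - (n + 1) + 1 + n = v from by omega,
              show v - (n + 1) + 1 = v - n from by omega, Nat.cast_sub (by omega)]
          rw [heq]
          have himg : ∑ k ∈ (s.image ν).image (fun v => v - (n + 1)), g k
              = ∑ v ∈ s.image ν, g (v - (n + 1)) :=
            Finset.sum_image (fun v hv w hw hvw => by
              have h1 := hv_ge v hv
              have h2 := hv_ge w hw
              omega)
          rw [← himg]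
          exact Summable.sum_le_tsum _ (fun k _ => hg_nonneg k) hgsum
  -- summability of the double series
  have hf_nonneg : ∀ p : ℕ × ℕ, 0 ≤ ψ (mA17 n p.1 + p.2) := by
    intro p
    have := hm_ge p.1
    exact hψ _ (by omega)
  have hfsum : Summable (fun p : ℕ × ℕ => ψ (mA17 n p.1 + p.2)) :=
    summable_of_sum_le hf_nonneg key
  have habs_le : ∀ p : ℕ × ℕ, |ψ (mA17 n p.1 + p.2) * Real.sin (θ p)| ≤ ψ (mA17 n p.1 + p.2) := by
    intro p
    rw [abs_mul]
    calc |ψ (mA17 n p.1 + p.2)| * |Real.sin (θ p)| ≤ |ψ (mA17 n p.1 + p.2)| * 1 :=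
          mul_le_mul_of_nonneg_left (abs_le.mpr ⟨Real.neg_one_le_sin _, Real.sin_le_one _⟩)
            (abs_nonneg _)
      _ = ψ (mA17 n p.1 + p.2) := by rw [mul_one, abs_of_nonneg (hf_nonneg p)]
  have h1 : Summable (fun p : ℕ × ℕ => |ψ (mA17 n p.1 + p.2) * Real.sin (θ p)|) :=
    Summable.of_nonneg_of_le (fun p => abs_nonneg _) habs_le hfsum
  have hfib : ∀ b : ℕ, Summable (fun c : ℕ => ψ (mA17 n b + c)) := by
    intro b
    exact (hfsum.prod_factor b)
  have hprod : ∑' p : ℕ × ℕ, ψ (mA17 n p.1 + p.2) = ∑' k : ℕ, ∑' j : ℕ, ψ (mA17 n k + j) :=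
    Summable.tsum_prod' hfsum hfsum.prod_factor
  refine ⟨h1, ?_, ?_⟩
  · have h2 : Summable (fun p : ℕ × ℕ => ψ (mA17 n p.1 + p.2) * Real.sin (θ p)) := h1.of_abs
    calc |∑' p : ℕ × ℕ, ψ (mA17 n p.1 + p.2) * Real.sin (θ p)|
        ≤ ∑' p : ℕ × ℕ, |ψ (mA17 n p.1 + p.2) * Real.sin (θ p)| := by
          have h1' : Summable fun p : ℕ × ℕ => ‖ψ (mA17 n p.1 + p.2) * Real.sin (θ p)‖ := h1
          simpa only [Real.norm_eq_abs] using norm_tsum_le_tsum_norm h1'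
      _ ≤ ∑' p : ℕ × ℕ, ψ (mA17 n p.1 + p.2) := Summable.tsum_le_tsum habs_le h1 hfsum
      _ = ∑' k : ℕ, ∑' j : ℕ, ψ (mA17 n k + j) := hprod
  · rw [← hprod]
    exact Summable.tsum_le_of_sum_le hfsum key

theorem stmt_17 (ψ : ℕ → ℝ) (hψ : ∀ k, 1 ≤ k → 0 ≤ ψ k)
    (hsum : Summable (fun k : ℕ => (k : ℝ) * ψ k)) (n : ℕ) (hn : 1 ≤ n) (x β t : ℝ) :
    Summable (fun p : ℕ × ℕ =>
      |ψ ((2 * (p.1 + 1) + 1) * n - (p.1 + 1) + p.2) *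
        Real.sin ((((2 * (p.1 + 1) + 1) * n - (p.1 + 1) + p.2 : ℕ) : ℝ) * t +
          (((p.1 + 1 : ℕ) : ℝ) + 1 / 2) * (2 * (n : ℝ) - 1) * x + β * Real.pi / 2)|) ∧
    |∑' p : ℕ × ℕ,
        ψ ((2 * (p.1 + 1) + 1) * n - (p.1 + 1) + p.2) *
          Real.sin ((((2 * (p.1 + 1) + 1) * n - (p.1 + 1) + p.2 : ℕ) : ℝ) * t +
            (((p.1 + 1 : ℕ) : ℝ) + 1 / 2) * (2 * (n : ℝ) - 1) * x + β * Real.pi / 2)| ≤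
      ∑' k : ℕ, ∑' j : ℕ, ψ ((2 * (k + 1) + 1) * n - (k + 1) + j) ∧
    ∑' k : ℕ, ∑' j : ℕ, ψ ((2 * (k + 1) + 1) * n - (k + 1) + j) ≤
      (1 / (n : ℝ)) * ∑' k : ℕ, ((k + 1 : ℕ) : ℝ) * ψ (k + 1 + n) := by
  exact aux17 ψ hψ hsum n hn (fun p =>
    (((2 * (p.1 + 1) + 1) * n - (p.1 + 1) + p.2 : ℕ) : ℝ) * t +
      (((p.1 + 1 : ℕ) : ℝ) + 1 / 2) * (2 * (n : ℝ) - 1) * x + β * Real.pi / 2)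
end

section
/- For every α > 0 and every positive integer n, e^{−αn}/((1−e^{−α})(1−e^{−α(2n−1)})) ≤ e^{−αn}/(1−e^{−α}) + e^{−α(n+1)}/(n·(1−e^{−α})²). -/
theorem stmt_19 (α : ℝ) (hα : 0 < α) (n : ℕ) (hn : 1 ≤ n) :
    Real.exp (-α * n) /
        ((1 - Real.exp (-α)) * (1 - Real.exp (-α * (2 * (n : ℝ) - 1)))) ≤
      Real.exp (-α * n) / (1 - Real.exp (-α)) +
        Real.exp (-α * ((n : ℝ) + 1)) / ((n : ℝ) * (1 - Real.exp (-α)) ^ 2) := by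
  obtain ⟨k, rfl⟩ : ∃ k, n = k + 1 := ⟨n - 1, by omega⟩
  set q := Real.exp (-α) with hqdef
  have hq0 : 0 < q := Real.exp_pos _
  have hq1 : q < 1 := by
    rw [hqdef, Real.exp_lt_one_iff]; linarith
  have hA : 0 < 1 - q := by linarith
  have hB : 0 < 1 - q ^ (2 * k + 1) := by
    have := pow_lt_one₀ hq0.le hq1 (by omega : 2 * k + 1 ≠ 0)
    linarith
  have e1 : Real.exp (-α * (↑(k + 1) : ℝ)) = q ^ (k + 1) := by
    rw [hqdef, ← Real.exp_nat_mul]; congr 1; push_cast; ring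
  have e2 : Real.exp (-α * (2 * (↑(k + 1) : ℝ) - 1)) = q ^ (2 * k + 1) := by
    rw [hqdef, ← Real.exp_nat_mul]; congr 1; push_cast; ring
  have e3 : Real.exp (-α * ((↑(k + 1) : ℝ) + 1)) = q ^ (k + 2) := by
    rw [hqdef, ← Real.exp_nat_mul]; congr 1; push_cast; ring
  rw [e1, e2, e3]
  -- key geometric-sum inequality
  have hsum : ((2 * k + 1 : ℕ) : ℝ) * q ^ (2 * k) ≤
      ∑ i ∈ Finset.range (2 * k + 1), q ^ i := by
    have h := Finset.card_nsmul_le_sum (Finset.range (2 * k + 1))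
      (fun i => q ^ i) (q ^ (2 * k)) (fun i hi => by
        exact pow_le_pow_of_le_one hq0.le hq1.le
          (by simpa using Nat.lt_succ_iff.mp (Finset.mem_range.mp hi)))
    simpa [nsmul_eq_mul] using h
  have hgs := geom_sum_mul q (2 * k + 1)
  have key : ((k : ℝ) + 1) * (1 - q) * q ^ (2 * k) ≤ 1 - q ^ (2 * k + 1) := by
    have h2 := mul_le_mul_of_nonneg_right hsum hA.le
    have hk0 : (0 : ℝ) ≤ (k : ℝ) := Nat.cast_nonneg k
    have hq2k : (0 : ℝ) ≤ q ^ (2 * k) := pow_nonneg hq0.le _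
    push_cast at h2
    nlinarith [mul_nonneg (mul_nonneg hk0 hq2k) hA.le]
  -- split the left side
  have h1 : q ^ (k + 1) / ((1 - q) * (1 - q ^ (2 * k + 1))) =
      q ^ (k + 1) / (1 - q) +
        q ^ (k + 2) * q ^ (2 * k) / ((1 - q) * (1 - q ^ (2 * k + 1))) := by
    field_simp
    ring
  rw [h1]
  have hn0 : (0 : ℝ) < ((k : ℝ) + 1) := by positivity
  have h2 : q ^ (k + 2) * q ^ (2 * k) / ((1 - q) * (1 - q ^ (2 * k + 1))) ≤
      q ^ (k + 2) / (((k : ℝ) + 1) * (1 - q) ^ 2) := by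
    rw [div_le_div_iff₀ (by positivity) (by positivity)]
    have hmul := mul_le_mul_of_nonneg_left key
      (by positivity : (0 : ℝ) ≤ q ^ (k + 2) * (1 - q))
    nlinarith [hmul]
  push_cast
  linarith [h2]
end
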